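/- Let I be an irreducible interval of a MinBudget instance (N, ⊴, c). Then every filter F ⊆ I of ⊴_I with r(F) > r(I) satisfies c(F) ≤ 0. -/

import Mathlib

open List

variable {ι : Type*} [DecidableEq ι]

/-- Total cost of a schedule (list of jobs). -/
def listCost (c : ι → ℝ) (S : List ι) : ℝ := (S.map c).sum

/-- Budget of a schedule: maximum cost of a prefix (the empty prefix has cost 0). -/
def listBudget (c : ι → ℝ) : List ι → ℝ
  | [] => 0
  | j :: t => max 0 (c j + listBudget c t)

/-- Return of a schedule. -/
def listReturn (c : ι → ℝ) (S : List ι) : ℝ := listCost c S - listBudget c S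

/-- `S` enumerates the finite job set `N` without repetition. -/
def IsScheduleOf (N : Finset ι) (S : List ι) : Prop :=
  S.Nodup ∧ ∀ j, j ∈ S ↔ j ∈ N

/-- `S` is a linear extension of the precedence relation `r` (restricted to its jobs). -/
def RespectsOrder (r : ι → ι → Prop) (S : List ι) : Prop :=
  ∀ i j, r i j → i ∈ S → j ∈ S → S.idxOf i ≤ S.idxOf j

/-- Minimum budget over all feasible schedules of the job set `X`. -/
noncomputable def setBudget (r : ι → ι → Prop) (c : ι → ℝ) (X : Finset ι) : ℝ :=
  sInf {b | ∃ S : List ι, IsScheduleOf X S ∧ RespectsOrder r S ∧ listBudget c S = b}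

/-- Total cost of a job set. -/
def setCost (c : ι → ℝ) (X : Finset ι) : ℝ := ∑ j ∈ X, c j

/-- Return of a job set. -/
noncomputable def setReturn (r : ι → ι → Prop) (c : ι → ℝ) (X : Finset ι) : ℝ :=
  setCost c X - setBudget r c X

/-- The cbr-preorder on job sets. -/
def cbrLE (r : ι → ι → Prop) (c : ι → ℝ) (X Y : Finset ι) : Prop :=
  (setCost c X < 0 ∧ 0 ≤ setCost c Y) ∨
  (setCost c X < 0 ∧ setCost c Y < 0 ∧ setBudget r c X < setBudget r c Y) ∨
  (setCost c X < 0 ∧ setCost c Y < 0 ∧ setBudget r c X = setBudget r c Y ∧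
    setReturn r c X ≤ setReturn r c Y) ∨
  (0 ≤ setCost c X ∧ 0 ≤ setCost c Y ∧ setReturn r c X ≤ setReturn r c Y)

/-- `J` is an ideal (downward-closed subset) of `r` restricted to `I`. -/
def IsIdealIn (r : ι → ι → Prop) (I J : Finset ι) : Prop :=
  J ⊆ I ∧ ∀ j ∈ J, ∀ i ∈ I, r i j → i ∈ J

/-- `F` is a filter (upward-closed subset) of `r` restricted to `I`. -/
def IsFilterIn (r : ι → ι → Prop) (I F : Finset ι) : Prop :=
  F ⊆ I ∧ ∀ i ∈ F, ∀ j ∈ I, r i j → j ∈ F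

/-- `I` is an interval of `r` on `N`: intersection of an ideal and a filter. -/
def IsIntervalIn (r : ι → ι → Prop) (N I : Finset ι) : Prop :=
  ∃ J F, IsIdealIn r N J ∧ IsFilterIn r N F ∧ I = J ∩ F

/-- An irreducible interval: every ideal of the restricted order is `⪰` the interval. -/
def IsIrreducibleIn (r : ι → ι → Prop) (c : ι → ℝ) (N I : Finset ι) : Prop :=
  IsIntervalIn r N I ∧ ∀ J, IsIdealIn r I J → cbrLE r c I J

/-- A schedule (given as blocks `SS`) in increasing irreducible structure. -/
def IncIrrStructure (r : ι → ι → Prop) (c : ι → ℝ) (N : Finset ι)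
    (SS : List (List ι)) : Prop :=
  IsScheduleOf N SS.flatten ∧ RespectsOrder r SS.flatten ∧
  (∀ S ∈ SS, IsIrreducibleIn r c N S.toFinset ∧ RespectsOrder r S ∧
    listBudget c S = setBudget r c S.toFinset) ∧
  ∀ i j : Fin SS.length, i < j → cbrLE r c (SS.get i).toFinset (SS.get j).toFinset

/-! In both cases below we exhibit an ideal `J` of `I` with `c(J) ≤ c(I) - c(F)` for which
irreducibility, `I ⪯ J`, forces `c(I) ≤ c(J)`.

If `c(I) ≥ 0`, take `J = I \ F`. Running an optimal schedule of `J` and then one of `F` gives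
`b(I) ≤ max (b(J)) (c(J) + b(F))`, and `r(F) > r(I)` says exactly that `c(J) + b(F) < b(I)`; so
`b(I) ≤ b(J)`, and the last clause of `⪯` gives `c(I) ≤ c(J)`.

If `c(I) < 0`, split an optimal schedule of `I` as `P ++ Q` with `P` minimising the cost of its
`F`-jobs, and delete the `F`-jobs of `Q`. Every prefix of `Q` then has `F`-jobs of nonnegative
cost, so the budget does not grow: the resulting ideal `J` has `b(J) ≤ b(I)`, while
`c(J) = c(I) - c(F) + c(F ∩ P) ≤ c(I) - c(F)`. With `c(I) < 0` and `b(J) ≤ b(I)`, `I ⪯ J`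
again forces `c(I) ≤ c(J)`. -/

section ListBudget

variable {α : Type*} (c : α → ℝ)

lemma listCost_append (A B : List α) : listCost c (A ++ B) = listCost c A + listCost c B := by
  simp [listCost]

lemma listBudget_nonneg (S : List α) : 0 ≤ listBudget c S := by
  cases S <;> simp [listBudget]

lemma listBudget_append (A B : List α) :
    listBudget c (A ++ B) = max (listBudget c A) (listCost c A + listBudget c B) := by
  induction A with
  | nil => simp [listBudget, listCost, listBudget_nonneg]
  | cons a t ih =>
    simp only [List.cons_append, listBudget, ih, listCost, List.map_cons, List.sum_cons]
    rw [← max_add_add_left, ← max_assoc, ← add_assoc]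

variable {c}

lemma listCost_le_listBudget_of_prefix {P S : List α} (h : P <+: S) :
    listCost c P ≤ listBudget c S := by
  obtain ⟨R, rfl⟩ := h
  rw [listBudget_append]
  exact le_max_of_le_right (le_add_of_nonneg_right (listBudget_nonneg c R))

lemma listBudget_le_of_forall_prefix {S : List α} {B : ℝ} (hB : 0 ≤ B)
    (h : ∀ P, P <+: S → listCost c P ≤ B) : listBudget c S ≤ B := by
  induction S generalizing B with
  | nil => simpa [listBudget] using hB
  | cons a t ih =>
    have ha : c a ≤ B := by simpa [listCost] using h [a] (List.prefix_append [a] t)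
    have ht : listBudget c t ≤ B - c a := by
      refine ih (by linarith [h [] List.nil_prefix]) fun P hP => ?_
      have := h (a :: P) (List.cons_prefix_cons.2 ⟨rfl, hP⟩)
      simp only [listCost, List.map_cons, List.sum_cons] at this ⊢
      linarith
    exact max_le hB (by linarith)

lemma listBudget_filter_not_le {Q : List α} (p : α → Prop) [DecidablePred p]
    (h : ∀ R, R <+: Q → 0 ≤ listCost c (R.filter p)) :
    listBudget c (Q.filter fun x => ¬p x) ≤ listBudget c Q := by
  refine listBudget_le_of_forall_prefix (listBudget_nonneg c Q) fun P hP => ?_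
  obtain ⟨R, hR, rfl⟩ := List.prefix_filter_iff.1 hP
  have hsplit := List.sum_map_filter_add_sum_map_filter_not p c R
  have := h R hR
  have := listCost_le_listBudget_of_prefix (c := c) hR
  unfold listCost at *
  linarith

lemma exists_append_forall_prefix_filter_nonneg (S : List α) (p : α → Prop) [DecidablePred p] :
    ∃ P Q, S = P ++ Q ∧ listCost c (P.filter p) ≤ 0 ∧
      ∀ R, R <+: Q → 0 ≤ listCost c (R.filter p) := by
  classical
  obtain ⟨P, hP, hmin⟩ := S.inits.toFinset.exists_min_image (fun P => listCost c (P.filter p))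
    ⟨[], by simp⟩
  rw [List.mem_toFinset, List.mem_inits] at hP
  obtain ⟨Q, rfl⟩ := hP
  refine ⟨P, Q, rfl, by simpa [listCost] using hmin [] (by simp), fun R hR => ?_⟩
  have hPR : P ++ R ∈ (P ++ Q).inits.toFinset := by
    rw [List.mem_toFinset, List.mem_inits]
    exact (List.prefix_append_right_inj P).2 hR
  have := hmin _ hPR
  simp only [List.filter_append, listCost_append] at this
  linarith

end ListBudget

section Schedules

variable {r : ι → ι → Prop} {c : ι → ℝ}

lemma IsScheduleOf.toFinset_eq {X : Finset ι} {S : List ι} (h : IsScheduleOf X S) :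
    S.toFinset = X := by
  ext; simp [h.2]

lemma isScheduleOf_toFinset {S : List ι} (h : S.Nodup) : IsScheduleOf S.toFinset S :=
  ⟨h, by simp⟩

lemma listCost_eq_setCost {S : List ι} (h : S.Nodup) : listCost c S = setCost c S.toFinset :=
  (List.sum_toFinset c h).symm

lemma setCost_eq_listCost_filter {X Y : Finset ι} {S : List ι} (hS : IsScheduleOf X S)
    (hYX : Y ⊆ X) : setCost c Y = listCost c (S.filter (· ∈ Y)) := by
  rw [listCost_eq_setCost (hS.1.filter _), List.toFinset_filter, hS.toFinset_eq]
  congr 1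
  ext; simpa using fun h => hYX h

lemma respectsOrder_iff_pairwise {S : List ι} (hS : S.Nodup) :
    RespectsOrder r S ↔ S.Pairwise fun i j => r j i → j = i := by
  refine ⟨fun h => List.pairwise_iff_get.2 fun a b hab hba => ?_, fun h i j hij hi hj => ?_⟩
  · have := h _ _ hba (S.get_mem _) (S.get_mem _)
    rw [List.get_idxOf hS, List.get_idxOf hS] at this
    exact absurd hab this.not_gt
  · by_contra! hlt
    have hi' := List.idxOf_lt_length_iff.2 hi
    have hj' := List.idxOf_lt_length_iff.2 hj
    have := List.pairwise_iff_get.1 h ⟨_, hj'⟩ ⟨_, hi'⟩ hlt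
    rw [List.idxOf_get hi', List.idxOf_get hj'] at this
    exact hlt.ne (congrArg S.idxOf (this hij).symm)

lemma RespectsOrder.sublist {S T : List ι} (hS : S.Nodup) (h : RespectsOrder r S)
    (hTS : T <+ S) : RespectsOrder r T :=
  (respectsOrder_iff_pairwise (hS.sublist hTS)).2
    (((respectsOrder_iff_pairwise hS).1 h).sublist hTS)

lemma exists_schedule (hr : IsPartialOrder ι r) (X : Finset ι) :
    ∃ S, IsScheduleOf X S ∧ RespectsOrder r S := by
  classical
  obtain ⟨s, hs, hrs⟩ := extend_partialOrder r
  refine ⟨X.sort s, ⟨X.sort_nodup s, fun j => X.mem_sort s⟩,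
    (respectsOrder_iff_pairwise (X.sort_nodup s)).2 ?_⟩
  exact (X.pairwise_sort s).imp fun hij hji => (antisymm hij (hrs _ _ hji)).symm

lemma setBudget_le_listBudget {X : Finset ι} {S : List ι} (hS : IsScheduleOf X S)
    (hSr : RespectsOrder r S) : setBudget r c X ≤ listBudget c S :=
  csInf_le ⟨0, fun _ ⟨T, _, _, hT⟩ => hT ▸ listBudget_nonneg c T⟩ ⟨S, hS, hSr, rfl⟩

lemma exists_optimal_schedule (hr : IsPartialOrder ι r) (c : ι → ℝ) (X : Finset ι) :
    ∃ S, IsScheduleOf X S ∧ RespectsOrder r S ∧ listBudget c S = setBudget r c X := by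
  set budgets := {b | ∃ S, IsScheduleOf X S ∧ RespectsOrder r S ∧ listBudget c S = b}
  obtain ⟨S, hS, hSr⟩ := exists_schedule hr X
  have hfin : budgets.Finite := by
    refine (X.toList.permutations.finite_toSet.image (listBudget c)).subset ?_
    rintro _ ⟨T, hT, -, rfl⟩
    refine ⟨T, List.mem_permutations.2 ?_, rfl⟩
    exact List.perm_of_nodup_nodup_toFinset_eq hT.1 X.nodup_toList (by simp [hT.toFinset_eq])
  exact Set.Nonempty.csInf_mem (s := budgets) ⟨_, S, hS, hSr, rfl⟩ hfin

end Schedules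

section IdealsFilters

variable {r : ι → ι → Prop} {c : ι → ℝ} {I F : Finset ι}

lemma IsFilterIn.isIdealIn_sdiff (hF : IsFilterIn r I F) : IsIdealIn r I (I \ F) := by
  refine ⟨Finset.sdiff_subset, fun j hj i hi hij => ?_⟩
  rw [Finset.mem_sdiff] at hj ⊢
  exact ⟨hi, fun hiF => hj.2 (hF.2 i hiF j hj.1 hij)⟩

lemma setBudget_le_max_sdiff (hr : IsPartialOrder ι r) (c : ι → ℝ) (hF : IsFilterIn r I F) :
    setBudget r c I ≤ max (setBudget r c (I \ F)) (setCost c (I \ F) + setBudget r c F) := by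
  obtain ⟨SJ, hSJ, hSJr, hSJb⟩ := exists_optimal_schedule hr c (I \ F)
  obtain ⟨SF, hSF, hSFr, hSFb⟩ := exists_optimal_schedule hr c F
  have hsched : IsScheduleOf I (SJ ++ SF) := by
    refine ⟨List.nodup_append.2 ⟨hSJ.1, hSF.1, ?_⟩, fun j => ?_⟩
    · rintro a ha _ hb rfl
      exact (Finset.mem_sdiff.1 ((hSJ.2 a).1 ha)).2 ((hSF.2 a).1 hb)
    · rw [List.mem_append, hSJ.2, hSF.2, Finset.mem_sdiff]
      by_cases hjF : j ∈ F
      · simp [hjF, hF.1 hjF]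
      · simp [hjF]
  have hord : RespectsOrder r (SJ ++ SF) := by
    rw [respectsOrder_iff_pairwise hsched.1, List.pairwise_append]
    refine ⟨(respectsOrder_iff_pairwise hSJ.1).1 hSJr, (respectsOrder_iff_pairwise hSF.1).1 hSFr,
      fun a ha b hb hba => absurd (hF.2 b ((hSF.2 b).1 hb) a ?_ hba) ?_⟩
    · exact (Finset.mem_sdiff.1 ((hSJ.2 a).1 ha)).1
    · exact (Finset.mem_sdiff.1 ((hSJ.2 a).1 ha)).2
  have := setBudget_le_listBudget (c := c) hsched hord
  rwa [listBudget_append, hSJb, hSFb, listCost_eq_setCost hSJ.1, hSJ.toFinset_eq] at this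

lemma isIdealIn_toFinset_append_filter_not_mem {P Q : List ι} (hS : IsScheduleOf I (P ++ Q))
    (hSr : RespectsOrder r (P ++ Q)) (hF : IsFilterIn r I F) :
    IsIdealIn r I (P ++ Q.filter (· ∉ F)).toFinset := by
  have hpw := List.pairwise_append.1 ((respectsOrder_iff_pairwise hS.1).1 hSr)
  refine ⟨fun x hx => ?_, fun j hj i hi hij => ?_⟩
  · rw [← hS.toFinset_eq]
    simp only [List.mem_toFinset, List.mem_append, List.mem_filter] at hx ⊢
    tauto
  · simp only [List.mem_toFinset, List.mem_append, List.mem_filter, decide_eq_true_eq] at hj ⊢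
    rcases List.mem_append.1 ((hS.2 i).2 hi) with hiP | hiQ
    · exact Or.inl hiP
    rcases hj with hjP | ⟨hjQ, hjF⟩
    · exact Or.inl (hpw.2.2 j hjP i hiQ hij ▸ hjP)
    · exact Or.inr ⟨hiQ, fun hiF => hjF (hF.2 i hiF j ((hS.2 j).1 (by simp [hjQ])) hij)⟩

lemma exists_isIdealIn_setBudget_le (hr : IsPartialOrder ι r) (c : ι → ℝ)
    (hF : IsFilterIn r I F) :
    ∃ J, IsIdealIn r I J ∧ setBudget r c J ≤ setBudget r c I ∧
      setCost c J ≤ setCost c I - setCost c F := by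
  obtain ⟨S, hS, hSr, hSb⟩ := exists_optimal_schedule hr c I
  obtain ⟨P, Q, rfl, hP, hQ⟩ := exists_append_forall_prefix_filter_nonneg (c := c) S (· ∈ F)
  set T := P ++ Q.filter (· ∉ F)
  have hTS : T <+ P ++ Q := (List.filter_sublist).append_left P
  have hT : IsScheduleOf T.toFinset T := isScheduleOf_toFinset (hS.1.sublist hTS)
  refine ⟨T.toFinset, isIdealIn_toFinset_append_filter_not_mem hS hSr hF, ?_, ?_⟩
  · calc setBudget r c T.toFinset ≤ listBudget c T :=
          setBudget_le_listBudget hT (hSr.sublist hS.1 hTS)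
      _ ≤ listBudget c (P ++ Q) := by
          rw [listBudget_append, listBudget_append]
          gcongr
          exact listBudget_filter_not_le _ hQ
      _ = setBudget r c I := hSb
  · have hQsplit := List.sum_map_filter_add_sum_map_filter_not (· ∈ F) c Q
    rw [← listCost_eq_setCost hT.1, setCost_eq_listCost_filter hS hF.1,
      ← hS.toFinset_eq, ← listCost_eq_setCost hS.1]
    simp only [List.filter_append, listCost_append, T] at hP ⊢
    unfold listCost at *
    linarith

end IdealsFilters

section CbrPreorder

variable {r : ι → ι → Prop} {c : ι → ℝ} {X Y : Finset ι}

lemma cbrLE.setCost_le_of_nonneg (h : cbrLE r c X Y) (hX : 0 ≤ setCost c X)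
    (hb : setBudget r c X ≤ setBudget r c Y) : setCost c X ≤ setCost c Y := by
  rcases h with ⟨hX', -⟩ | ⟨hX', -⟩ | ⟨hX', -⟩ | ⟨-, -, hret⟩
  iterate 3 exact absurd hX hX'.not_ge
  unfold setReturn at hret
  linarith

lemma cbrLE.setCost_le_of_neg (h : cbrLE r c X Y) (hX : setCost c X < 0)
    (hb : setBudget r c Y ≤ setBudget r c X) : setCost c X ≤ setCost c Y := by
  rcases h with ⟨-, hY⟩ | ⟨-, -, hb'⟩ | ⟨-, -, hb', hret⟩ | ⟨hX', -⟩
  · linarith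
  · linarith
  · unfold setReturn at hret
    linarith
  · linarith

end CbrPreorder

theorem irreducible_large_return_filter (r : ι → ι → Prop) (hr : IsPartialOrder ι r)
    (c : ι → ℝ) (N I : Finset ι) (hI : IsIrreducibleIn r c N I) :
    ∀ F, IsFilterIn r I F → setReturn r c I < setReturn r c F → setCost c F ≤ 0 := by
  intro F hF hret
  have hcost : setCost c (I \ F) = setCost c I - setCost c F :=
    eq_sub_of_add_eq (Finset.sum_sdiff hF.1)
  rcases le_or_gt 0 (setCost c I) with hI0 | hI0
  · have hb : setBudget r c I ≤ setBudget r c (I \ F) := by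
      refine (le_max_iff.1 (setBudget_le_max_sdiff hr c hF)).resolve_right ?_
      unfold setReturn at hret
      linarith
    linarith [(hI.2 _ hF.isIdealIn_sdiff).setCost_le_of_nonneg hI0 hb]
  · obtain ⟨J, hJ, hbJ, hcJ⟩ := exists_isIdealIn_setBudget_le hr c hF
    linarith [(hI.2 J hJ).setCost_le_of_neg hI0 hbJ]
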